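/- Let G be a compact subgroup of the group of orientation-preserving homeomorphisms of the circle S¹ = ℝ/ℤ, equipped with the uniform metric. Then the rotation-number map ρ : G → ℝ/ℤ, which assigns to f ∈ G the translation number of any lift of f to ℝ, taken modulo ℤ, is a continuous and injective group homomorphism into the additive circle group ℝ/ℤ. -/

import Mathlib

instance Homeomorph.instGroup' {X : Type*} [TopologicalSpace X] : Group (X ≃ₜ X) where
  mul f g := g.trans f
  one := Homeomorph.refl X
  inv := Homeomorph.symm
  mul_assoc _ _ _ := rfl
  one_mul _ := rfl
  mul_one _ := rfl
  inv_mul_cancel f := Homeomorph.ext fun x => f.symm_apply_apply x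

@[simp] theorem Homeomorph.mul_apply' {X : Type*} [TopologicalSpace X] (f g : X ≃ₜ X) (x : X) :
    (f * g) x = f (g x) := rfl

@[simp] theorem Homeomorph.one_apply' {X : Type*} [TopologicalSpace X] (x : X) :
    (1 : X ≃ₜ X) x = x := rfl

noncomputable instance Homeomorph.instMetricSpace {Y : Type*} [MetricSpace Y] [CompactSpace Y] :
    MetricSpace (Y ≃ₜ Y) :=
  MetricSpace.induced (fun f => (f : C(Y, Y)))
    (fun _ _ h => Homeomorph.ext fun x => ContinuousMap.congr_fun h x)
    inferInstance

/-! If `u ∈ G` fixes a point, choose a lift `F` of `u` fixing `a`. For every `y ∈ [a, a + 1]` the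
orbit `Fⁿ y` is monotone and bounded, so `y` and `F y` have the same limit under `Fⁿ`. Along a
uniformly convergent subsequence `u^(φ k) → h` (compactness of `G`) this gives `h y = h (u y)`,
hence `u y = y`: every element of `G` other than `1` acts without fixed points.

Two lifts of elements of `G` therefore never cross (at a crossing point `g⁻¹ f` has a fixed
point), so they are comparable pointwise. In particular `F * F' ≤ F' * F` or the reverse, which
sandwiches `(F * F')ⁿ` between `Fⁿ * F'ⁿ` and `F'ⁿ * Fⁿ`; since `τ` is additive up to a bounded
error, dividing by `n` gives `τ (F * F') = τ F + τ F'`. Injectivity and the bound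
`dist (ρ f) (ρ g) ≤ dist f g` both come from `τ U = U x - x` at some `x`, for a continuous lift `U`
of `f * g⁻¹`. -/

open Function Filter Topology Set

section

local notation "τ" => CircleDeg1Lift.translationNumber

section OrderedMonoid

variable {M : Type*} [Monoid M] [Preorder M] [MulLeftMono M] [MulRightMono M] {a b : M}

theorem pow_mul_le_mul_pow_of_mul_le_mul (h : a * b ≤ b * a) (n : ℕ) : a ^ n * b ≤ b * a ^ n := by
  induction n with
  | zero => simp
  | succ n ih =>
    calc a ^ (n + 1) * b = a ^ n * (a * b) := by rw [pow_succ, mul_assoc]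
      _ ≤ a ^ n * (b * a) := mul_le_mul_right h _
      _ = a ^ n * b * a := (mul_assoc _ _ _).symm
      _ ≤ b * a ^ n * a := mul_le_mul_left ih _
      _ = b * a ^ (n + 1) := by rw [pow_succ, mul_assoc]

theorem mul_pow_le_pow_mul_of_mul_le_mul (h : a * b ≤ b * a) (n : ℕ) : a * b ^ n ≤ b ^ n * a := by
  induction n with
  | zero => simp
  | succ n ih =>
    calc a * b ^ (n + 1) = a * b ^ n * b := by rw [pow_succ, mul_assoc]
      _ ≤ b ^ n * a * b := mul_le_mul_left ih _
      _ = b ^ n * (a * b) := mul_assoc _ _ _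
      _ ≤ b ^ n * (b * a) := mul_le_mul_right h _
      _ = b ^ (n + 1) * a := by rw [pow_succ, mul_assoc]

theorem pow_mul_pow_le_mul_pow_of_mul_le_mul (h : a * b ≤ b * a) (n : ℕ) :
    a ^ n * b ^ n ≤ (a * b) ^ n := by
  induction n with
  | zero => simp
  | succ n ih =>
    calc a ^ (n + 1) * b ^ (n + 1) = a ^ n * (a * b ^ n) * b := by
          simp only [pow_succ, mul_assoc]
      _ ≤ a ^ n * (b ^ n * a) * b :=
          mul_le_mul_left (mul_le_mul_right (mul_pow_le_pow_mul_of_mul_le_mul h n) _) _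
      _ = a ^ n * b ^ n * (a * b) := by simp only [mul_assoc]
      _ ≤ (a * b) ^ n * (a * b) := mul_le_mul_left ih _
      _ = (a * b) ^ (n + 1) := (pow_succ _ _).symm

theorem mul_pow_le_pow_mul_pow_of_mul_le_mul (h : a * b ≤ b * a) (n : ℕ) :
    (a * b) ^ n ≤ b ^ n * a ^ n := by
  induction n with
  | zero => simp
  | succ n ih =>
    calc (a * b) ^ (n + 1) = (a * b) ^ n * (a * b) := pow_succ _ _
      _ ≤ b ^ n * a ^ n * (a * b) := mul_le_mul_left ih _
      _ = b ^ n * (a ^ (n + 1) * b) := by simp only [pow_succ, mul_assoc]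
      _ ≤ b ^ n * (b * a ^ (n + 1)) :=
          mul_le_mul_right (pow_mul_le_mul_pow_of_mul_le_mul h (n + 1)) _
      _ = b ^ (n + 1) * a ^ (n + 1) := by simp only [pow_succ, mul_assoc]

end OrderedMonoid

theorem eq_zero_of_forall_natCast_mul_abs_le {x C : ℝ} (h : ∀ n : ℕ, n * |x| ≤ C) : x = 0 := by
  by_contra hx
  obtain ⟨n, hn⟩ := exists_nat_gt (C / |x|)
  have := h n
  rw [div_lt_iff₀ (abs_pos.2 hx)] at hn
  linarith

namespace CircleDeg1Lift

instance : MulLeftMono CircleDeg1Lift := ⟨fun f _ _ h x => f.monotone (h x)⟩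

instance : MulRightMono CircleDeg1Lift := ⟨fun f _ _ h x => h (f x)⟩

theorem abs_translationNumber_mul_sub_le (f g : CircleDeg1Lift) :
    |τ (f * g) - (τ f + τ g)| ≤ 4 := by
  have hfg := (f * g).dist_map_zero_translationNumber_le
  have hf := f.dist_map_zero_translationNumber_le
  have hg := g.dist_map_zero_translationNumber_le
  have h := (f.dist_map_map_zero_lt g).le
  rw [CircleDeg1Lift.mul_apply] at hfg
  simp only [Real.dist_eq, abs_le] at *
  constructor <;> linarith

theorem translationNumber_mul_of_mul_le_mul {f g : CircleDeg1Lift} (h : f * g ≤ g * f) :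
    τ (f * g) = τ f + τ g := by
  refine sub_eq_zero.1 (eq_zero_of_forall_natCast_mul_abs_le (C := 4) fun n => ?_)
  have hlow := translationNumber_mono (pow_mul_pow_le_mul_pow_of_mul_le_mul h n)
  have hup := translationNumber_mono (mul_pow_le_pow_mul_pow_of_mul_le_mul h n)
  have h₁ := abs_translationNumber_mul_sub_le (f ^ n) (g ^ n)
  have h₂ := abs_translationNumber_mul_sub_le (g ^ n) (f ^ n)
  simp only [translationNumber_pow] at hlow hup h₁ h₂
  rw [← Nat.abs_cast, ← abs_mul, abs_le]
  rw [abs_le] at h₁ h₂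
  constructor <;> nlinarith

end CircleDeg1Lift

theorem Homeomorph.dist_apply_le_dist {Y : Type*} [MetricSpace Y] [CompactSpace Y]
    (f g : Y ≃ₜ Y) (y : Y) : dist (f y) (g y) ≤ dist f g :=
  ContinuousMap.dist_apply_le_dist (f := (f : C(Y, Y))) (g := (g : C(Y, Y))) y

theorem Homeomorph.continuous_apply_of_compactSpace {Y : Type*} [MetricSpace Y] [CompactSpace Y]
    (y : Y) : Continuous fun f : Y ≃ₜ Y => f y :=
  (LipschitzWith.of_dist_le_mul (K := 1) fun f g => by
    simpa using Homeomorph.dist_apply_le_dist f g y).continuous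

theorem Homeomorph.coe_pow' {X : Type*} [TopologicalSpace X] (f : X ≃ₜ X) (n : ℕ) :
    ⇑(f ^ n) = f^[n] := by
  induction n with
  | zero => rfl
  | succ n ih => rw [pow_succ, iterate_succ, ← ih]; rfl

theorem eq_of_tendsto_pow_apply_of_isCompact {Y : Type*} [MetricSpace Y] [CompactSpace Y]
    {u : Y ≃ₜ Y} {K : Set (Y ≃ₜ Y)} (hK : IsCompact K) (hpow : ∀ n : ℕ, u ^ n ∈ K) {z w c : Y}
    (hz : Tendsto (fun n : ℕ => (u ^ n) z) atTop (𝓝 c))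
    (hw : Tendsto (fun n : ℕ => (u ^ n) w) atTop (𝓝 c)) : z = w := by
  obtain ⟨h, -, φ, hφ, hlim⟩ := hK.tendsto_subseq hpow
  have hlim_apply (y : Y) : Tendsto (fun k => (u ^ φ k) y) atTop (𝓝 (h y)) :=
    ((Homeomorph.continuous_apply_of_compactSpace y).tendsto h).comp hlim
  refine h.injective ?_
  rw [tendsto_nhds_unique (hlim_apply z) (hz.comp hφ.tendsto_atTop),
    tendsto_nhds_unique (hlim_apply w) (hw.comp hφ.tendsto_atTop)]

theorem exists_tendsto_iterate_of_mapsTo_Icc {F : ℝ → ℝ} (hF : Monotone F) {a b y : ℝ}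
    (hmaps : MapsTo F (Icc a b) (Icc a b)) (hy : y ∈ Icc a b) :
    ∃ l, Tendsto (fun n => F^[n] y) atTop (𝓝 l) := by
  have hbdd : ∀ n, F^[n] y ∈ Icc a b := fun n => hmaps.iterate n hy
  rcases le_total y (F y) with hle | hle
  · exact ⟨_, tendsto_atTop_ciSup (hF.monotone_iterate_of_le_map hle)
      ⟨b, forall_mem_range.2 fun n => (hbdd n).2⟩⟩
  · exact ⟨_, tendsto_atTop_ciInf (hF.antitone_iterate_of_map_le hle)
      ⟨a, forall_mem_range.2 fun n => (hbdd n).1⟩⟩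

theorem UnitAddCircle.coe_eq_coe_iff {x y : ℝ} :
    (x : UnitAddCircle) = y ↔ ∃ m : ℤ, x = y + m := by
  simp only [QuotientAddGroup.eq_iff_sub_mem, AddSubgroup.mem_zmultiples_iff, zsmul_one,
    eq_comm (b := x - y), ← sub_eq_iff_eq_add']

namespace CircleDeg1Lift

abbrev IsLift (F : CircleDeg1Lift) (f : UnitAddCircle → UnitAddCircle) : Prop :=
  Semiconj ((↑) : ℝ → UnitAddCircle) F f

variable {F F' : CircleDeg1Lift} {f : UnitAddCircle → UnitAddCircle}

theorem IsLift.surjective (hF : F.IsLift f) (hf : Surjective f) : Surjective F := by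
  intro y
  obtain ⟨z, hz⟩ := hf y
  obtain ⟨x, rfl⟩ := QuotientAddGroup.mk_surjective z
  obtain ⟨m, hm⟩ := UnitAddCircle.coe_eq_coe_iff.1 ((hF x).trans hz)
  exact ⟨x - m, by rw [map_sub_int, hm, add_sub_cancel_right]⟩

theorem IsLift.continuous (hF : F.IsLift f) (hf : Surjective f) : Continuous F :=
  F.continuous_iff_surjective.2 (hF.surjective hf)

theorem IsLift.mul {g : UnitAddCircle → UnitAddCircle} (hF : F.IsLift f) (hF' : F'.IsLift g) :
    (F * F').IsLift (f ∘ g) :=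
  hF.comp_right hF'

theorem IsLift.translate_mul (hF : F.IsLift f) (m : ℤ) :
    (↑(translate (Multiplicative.ofAdd (m : ℝ))) * F : CircleDeg1Lift).IsLift f := fun x => by
  rw [mul_apply, translate_apply, ← hF x]
  exact UnitAddCircle.coe_eq_coe_iff.2 ⟨m, add_comm _ _⟩

theorem IsLift.exists_eq_translate_mul (hF : F.IsLift f) (hF' : F'.IsLift f) (hf : Surjective f) :
    ∃ m : ℤ, F = translate (Multiplicative.ofAdd (m : ℝ)) * F' := by
  have hint (x : ℝ) : F x - F' x ∈ (AddSubgroup.zmultiples (1 : ℝ) : Set ℝ) :=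
    QuotientAddGroup.eq_iff_sub_mem.1 ((hF x).trans (hF' x).symm)
  have hconst (x : ℝ) : F x - F' x = F 0 - F' 0 :=
    isPreconnected_univ.constant_of_mapsTo
      (isDiscrete_iff_discreteTopology.2
        (inferInstanceAs (DiscreteTopology (AddSubgroup.zmultiples (1 : ℝ)))))
      ((hF.continuous hf).sub (hF'.continuous hf)).continuousOn (fun x _ => hint x) trivial trivial
  obtain ⟨m, hm⟩ := AddSubgroup.mem_zmultiples_iff.1 (hint 0)
  rw [zsmul_one] at hm
  refine ⟨m, ext fun x => ?_⟩
  rw [mul_apply, translate_apply]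
  linarith [hconst x]

theorem IsLift.eq_of_apply_eq (hF : F.IsLift f) (hF' : F'.IsLift f) (hf : Surjective f) {z : ℝ}
    (hz : F z = F' z) : F = F' := by
  obtain ⟨m, rfl⟩ := hF.exists_eq_translate_mul hF' hf
  have hm : (m : ℝ) = 0 := by simpa [translate_apply] using hz
  simp [hm]

theorem IsLift.coe_translationNumber_eq (hF : F.IsLift f) (hF' : F'.IsLift f) (hf : Surjective f) :
    (τ F : UnitAddCircle) = τ F' := by
  obtain ⟨m, rfl⟩ := hF.exists_eq_translate_mul hF' hf
  have hcomm : Commute (translate (Multiplicative.ofAdd (m : ℝ)) : CircleDeg1Lift) F' :=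
    commute_iff_commute.2 fun x => by simp [translate_apply, map_int_add]
  rw [translationNumber_mul_of_commute hcomm, translationNumber_translate]
  exact UnitAddCircle.coe_eq_coe_iff.2 ⟨m, add_comm _ _⟩

theorem IsLift.exists_isLift_apply_eq_self (hF : F.IsLift f) {a : ℝ} (ha : f a = a) :
    ∃ F₀ : CircleDeg1Lift, F₀.IsLift f ∧ F₀ a = a := by
  obtain ⟨m, hm⟩ := UnitAddCircle.coe_eq_coe_iff.1 ((hF a).trans ha)
  refine ⟨_, hF.translate_mul (-m), ?_⟩
  rw [mul_apply, translate_apply, hm]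
  push_cast
  ring

end CircleDeg1Lift

open CircleDeg1Lift

open Classical in
/-- Orientation-reversing homeomorphisms have no lift and get the junk value `0`. -/
noncomputable def rotationNumber (f : UnitAddCircle ≃ₜ UnitAddCircle) : UnitAddCircle :=
  if h : ∃ F : CircleDeg1Lift, F.IsLift f then (τ h.choose : UnitAddCircle) else 0

variable {F F' : CircleDeg1Lift} {f g u : UnitAddCircle ≃ₜ UnitAddCircle}

theorem rotationNumber_eq (hF : F.IsLift f) : rotationNumber f = τ F := by
  have h : ∃ F : CircleDeg1Lift, F.IsLift f := ⟨F, hF⟩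
  rw [rotationNumber, dif_pos h]
  exact h.choose_spec.coe_translationNumber_eq hF f.surjective

theorem exists_rotationNumber_eq_sub (hF : F.IsLift f) : ∃ x, rotationNumber f = f x - x := by
  obtain ⟨x, hx⟩ := F.exists_eq_add_translationNumber (hF.continuous f.surjective)
  refine ⟨x, ?_⟩
  rw [rotationNumber_eq hF, ← hF x, hx, AddCircle.coe_add, add_sub_cancel_left]

theorem eq_one_of_isFixedPt (hF : F.IsLift u) {K : Set (UnitAddCircle ≃ₜ UnitAddCircle)}
    (hK : IsCompact K) (hpow : ∀ n : ℕ, u ^ n ∈ K) {x : UnitAddCircle} (hx : IsFixedPt u x) :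
    u = 1 := by
  obtain ⟨a, rfl⟩ := QuotientAddGroup.mk_surjective x
  obtain ⟨F₀, hF₀, ha⟩ := hF.exists_isLift_apply_eq_self hx
  by_contra hu
  obtain ⟨z, hz⟩ := DFunLike.ne_iff.1 hu
  obtain ⟨y, hy, rfl⟩ : ∃ y ∈ Icc a (a + 1), (y : UnitAddCircle) = z :=
    ⟨_, Ico_subset_Icc_self (AddCircle.equivIco 1 a z).2, AddCircle.coe_equivIco⟩
  have hmaps : MapsTo F₀ (Icc a (a + 1)) (Icc a (a + 1)) := fun t ht =>
    ⟨ha ▸ F₀.monotone ht.1, by simpa only [map_add_one, ha] using F₀.monotone ht.2⟩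
  obtain ⟨l, hl⟩ := exists_tendsto_iterate_of_mapsTo_Icc F₀.monotone hmaps hy
  have horbit (t : ℝ) (n : ℕ) : (u ^ n) t = ((F₀^[n] t : ℝ) : UnitAddCircle) := by
    rw [Homeomorph.coe_pow']
    exact ((hF₀.iterate_right n) t).symm
  have hcoe := (AddCircle.continuous_mk' (1 : ℝ)).tendsto l
  refine hz (eq_of_tendsto_pow_apply_of_isCompact hK hpow (c := l) ?_ ?_)
  · rw [← hF₀ y]
    simp only [horbit, ← iterate_succ_apply]
    exact hcoe.comp (hl.comp (tendsto_add_atTop_nat 1))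
  · simp only [Homeomorph.one_apply', horbit]
    exact hcoe.comp hl

variable {G : Subgroup (UnitAddCircle ≃ₜ UnitAddCircle)}

theorem eq_one_of_mem_of_isFixedPt (hG : IsCompact (G : Set (UnitAddCircle ≃ₜ UnitAddCircle)))
    (hlift : ∀ f ∈ G, ∃ F : CircleDeg1Lift, F.IsLift f) (hu : u ∈ G) {x : UnitAddCircle}
    (hx : IsFixedPt u x) : u = 1 :=
  let ⟨_, hF⟩ := hlift u hu
  eq_one_of_isFixedPt hF hG (pow_mem hu) hx

theorem le_total_of_isLift (hG : IsCompact (G : Set (UnitAddCircle ≃ₜ UnitAddCircle)))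
    (hlift : ∀ f ∈ G, ∃ F : CircleDeg1Lift, F.IsLift f) (hf : f ∈ G) (hg : g ∈ G)
    (hF : F.IsLift f) (hF' : F'.IsLift g) : F ≤ F' ∨ F' ≤ F := by
  by_contra! h
  obtain ⟨x, hx⟩ := not_forall.1 h.1
  obtain ⟨y, hy⟩ := not_forall.1 h.2
  obtain ⟨z, hz⟩ := intermediate_value_univ₂ (hF.continuous f.surjective)
    (hF'.continuous g.surjective) (not_le.1 hy).le (not_le.1 hx).le
  have hfix : IsFixedPt (g⁻¹ * f) z := by
    rw [IsFixedPt, Homeomorph.mul_apply', ← hF z, hz, hF' z, ← Homeomorph.mul_apply',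
      inv_mul_cancel, Homeomorph.one_apply']
  obtain rfl : f = g := (inv_mul_eq_one.1
    (eq_one_of_mem_of_isFixedPt hG hlift (mul_mem (inv_mem hg) hf) hfix)).symm
  exact h.1 (hF.eq_of_apply_eq hF' f.surjective hz).le

theorem translationNumber_mul_of_mem (hG : IsCompact (G : Set (UnitAddCircle ≃ₜ UnitAddCircle)))
    (hlift : ∀ f ∈ G, ∃ F : CircleDeg1Lift, F.IsLift f) (hf : f ∈ G) (hg : g ∈ G)
    (hF : F.IsLift f) (hF' : F'.IsLift g) : τ (F * F') = τ F + τ F' := by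
  rcases le_total_of_isLift hG hlift (mul_mem hf hg) (mul_mem hg hf) (hF.mul hF')
    (hF'.mul hF) with h | h
  · exact translationNumber_mul_of_mul_le_mul h
  · rw [translationNumber_eq_of_semiconjBy (mul_assoc F' F F').symm,
      translationNumber_mul_of_mul_le_mul h, add_comm]

theorem rotationNumber_mul_of_mem (hG : IsCompact (G : Set (UnitAddCircle ≃ₜ UnitAddCircle)))
    (hlift : ∀ f ∈ G, ∃ F : CircleDeg1Lift, F.IsLift f) (hf : f ∈ G) (hg : g ∈ G) :
    rotationNumber (f * g) = rotationNumber f + rotationNumber g := by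
  obtain ⟨F, hF⟩ := hlift f hf
  obtain ⟨F', hF'⟩ := hlift g hg
  rw [rotationNumber_eq (f := f * g) (hF.mul hF'),
    translationNumber_mul_of_mem hG hlift hf hg hF hF', AddCircle.coe_add,
    rotationNumber_eq hF, rotationNumber_eq hF']

theorem exists_rotationNumber_sub_eq_of_mem
    (hG : IsCompact (G : Set (UnitAddCircle ≃ₜ UnitAddCircle)))
    (hlift : ∀ f ∈ G, ∃ F : CircleDeg1Lift, F.IsLift f) (hf : f ∈ G) (hg : g ∈ G) :
    ∃ x, rotationNumber f - rotationNumber g = (f * g⁻¹) x - x := by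
  have hfg : f * g⁻¹ ∈ G := mul_mem hf (inv_mem hg)
  obtain ⟨U, hU⟩ := hlift _ hfg
  obtain ⟨x, hx⟩ := exists_rotationNumber_eq_sub hU
  refine ⟨x, ?_⟩
  rw [← hx, sub_eq_iff_eq_add, ← rotationNumber_mul_of_mem hG hlift hfg hg, inv_mul_cancel_right]

theorem rotationNumber_injOn (hG : IsCompact (G : Set (UnitAddCircle ≃ₜ UnitAddCircle)))
    (hlift : ∀ f ∈ G, ∃ F : CircleDeg1Lift, F.IsLift f) :
    InjOn rotationNumber (G : Set (UnitAddCircle ≃ₜ UnitAddCircle)) := by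
  intro f hf g hg hfg
  obtain ⟨x, hx⟩ := exists_rotationNumber_sub_eq_of_mem hG hlift hf hg
  rw [hfg, sub_self, eq_comm, sub_eq_zero] at hx
  exact mul_inv_eq_one.1
    (eq_one_of_mem_of_isFixedPt hG hlift (mul_mem hf (inv_mem hg)) hx)

theorem dist_rotationNumber_le (hG : IsCompact (G : Set (UnitAddCircle ≃ₜ UnitAddCircle)))
    (hlift : ∀ f ∈ G, ∃ F : CircleDeg1Lift, F.IsLift f) (hf : f ∈ G) (hg : g ∈ G) :
    dist (rotationNumber f) (rotationNumber g) ≤ dist f g := by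
  obtain ⟨x, hx⟩ := exists_rotationNumber_sub_eq_of_mem hG hlift hf hg
  calc dist (rotationNumber f) (rotationNumber g) = dist (f (g⁻¹ x)) (g (g⁻¹ x)) := by
        rw [dist_eq_norm, hx, ← dist_eq_norm, Homeomorph.mul_apply', ← Homeomorph.mul_apply' g,
          mul_inv_cancel, Homeomorph.one_apply']
    _ ≤ dist f g := Homeomorph.dist_apply_le_dist f g _

end

/-- For a compact subgroup `G` of the group of orientation-preserving
homeomorphisms of the circle `ℝ/ℤ`, the rotation-number map `ρ : G → ℝ/ℤ` — sending
`f ∈ G` to the translation number `lim (Fⁿ(x) - x)/n` of any strictly increasing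
degree-one lift `F` of `f`, taken modulo `ℤ` — is a continuous injective group
homomorphism into the additive circle. -/
theorem rotation_number_continuous_injective_hom
    (G : Subgroup (UnitAddCircle ≃ₜ UnitAddCircle))
    (hG : IsCompact (G : Set (UnitAddCircle ≃ₜ UnitAddCircle)))
    (hop : ∀ f ∈ G, ∃ F : ℝ → ℝ, StrictMono F ∧ (∀ x : ℝ, F (x + 1) = F x + 1) ∧
      ∀ x : ℝ, f (x : UnitAddCircle) = ((F x : ℝ) : UnitAddCircle)) :
    ∃ ρ : ↥G → UnitAddCircle,
      (∀ (f : ↥G) (F : ℝ → ℝ), StrictMono F → (∀ x : ℝ, F (x + 1) = F x + 1) →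
        (∀ x : ℝ, (f : UnitAddCircle ≃ₜ UnitAddCircle) (x : UnitAddCircle)
          = ((F x : ℝ) : UnitAddCircle)) →
        ∀ τ : ℝ, Filter.Tendsto (fun n : ℕ => (F^[n] 0 - 0) / n) Filter.atTop (nhds τ) →
          ρ f = ((τ : ℝ) : UnitAddCircle)) ∧
      Continuous ρ ∧ Function.Injective ρ ∧
      ∀ f g : ↥G, ρ (f * g) = ρ f + ρ g := by
  have hlift : ∀ f ∈ G, ∃ F : CircleDeg1Lift, F.IsLift f := fun f hf =>
    let ⟨F, hmono, hF₁, hFf⟩ := hop f hf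
    ⟨⟨⟨F, hmono.monotone⟩, hF₁⟩, fun x => (hFf x).symm⟩
  refine ⟨fun f => rotationNumber f, fun f F hmono hF₁ hFf t ht => ?_,
    (LipschitzWith.of_dist_le_mul (K := 1) fun f g => by
      simpa [Subtype.dist_eq] using dist_rotationNumber_le hG hlift f.2 g.2).continuous,
    fun f g hfg => Subtype.ext (rotationNumber_injOn hG hlift f.2 g.2 hfg),
    fun f g => rotationNumber_mul_of_mem hG hlift f.2 g.2⟩
  let F₀ : CircleDeg1Lift := ⟨⟨F, hmono.monotone⟩, hF₁⟩
  dsimp only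
  rw [rotationNumber_eq (F := F₀) fun x => (hFf x).symm,
    F₀.translationNumber_eq_of_tendsto₀ (by simpa only [sub_zero] using ht :
      Tendsto (fun n : ℕ => F^[n] 0 / n) atTop (𝓝 t))]
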